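/- Let μ_T (for T ≥ T₀) and ν be Borel probability measures on ℝ^d such that sup_B |μ_T(B) - ν(B)| ≤ η(T) over all axis-parallel boxes B, where η(T) → 0. Let φ : ℝ^d → ℝ be given by φ(u,v) = log|Σ_{j=1}^J a_j e^{u_j + iv_j}| on ℝ^{2J} (d = 2J), with fixed nonzero a_j ∈ ℂ. Suppose additionally that the pushforward of ν under φ has a bounded density near each point. Then for each fixed τ, μ_T({φ > τ}) → ν({φ > τ}) as T → ∞. -/

import Mathlib

open MeasureTheory Filter Complex

namespace DistConv

abbrev X (J : ℕ) := (Fin J → ℝ) × (Fin J → ℝ)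

noncomputable def corner {J : ℕ} (n : ℕ) (p : X J) : (Fin J → ℤ) × (Fin J → ℤ) :=
  (fun i => ⌊(2 ^ n : ℝ) * p.1 i⌋, fun i => ⌊(2 ^ n : ℝ) * p.2 i⌋)

def cube {J : ℕ} (n : ℕ) (z : (Fin J → ℤ) × (Fin J → ℤ)) : Set (X J) :=
  {p | corner n p = z}

lemma floor_two_mul_div (x : ℝ) : ⌊x⌋ = ⌊2 * x⌋ / 2 := by
  have h1 : (↑⌊2 * x⌋ : ℝ) ≤ 2 * x := Int.floor_le _
  have h2 : 2 * x < ⌊2 * x⌋ + 1 := Int.lt_floor_add_one _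
  have hm : 2 * (⌊2 * x⌋ / 2) ≤ ⌊2 * x⌋ ∧ ⌊2 * x⌋ ≤ 2 * (⌊2 * x⌋ / 2) + 1 := by omega
  rw [Int.floor_eq_iff]
  have c1 : ((2 * (⌊2 * x⌋ / 2) : ℤ) : ℝ) ≤ ((⌊2 * x⌋ : ℤ) : ℝ) := by exact_mod_cast hm.1
  have c2 : ((⌊2 * x⌋ : ℤ) : ℝ) ≤ ((2 * (⌊2 * x⌋ / 2) + 1 : ℤ) : ℝ) := by exact_mod_cast hm.2
  push_cast at c1 c2
  constructor <;> [linarith; linarith]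

lemma floor_eq_of_two_mul {x y : ℝ} (h : ⌊2 * x⌋ = ⌊2 * y⌋) : ⌊x⌋ = ⌊y⌋ := by
  rw [floor_two_mul_div x, floor_two_mul_div y, h]

lemma floor_eq_iff_Ico {x : ℝ} {m : ℤ} (n : ℕ) :
    ⌊(2 ^ n : ℝ) * x⌋ = m ↔ x ∈ Set.Ico ((m : ℝ) / 2 ^ n) (((m : ℝ) + 1) / 2 ^ n) := by
  have h2 : (0 : ℝ) < 2 ^ n := by positivity
  rw [Int.floor_eq_iff, Set.mem_Ico, div_le_iff₀ h2, lt_div_iff₀ h2]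
  constructor <;> rintro ⟨u, v⟩ <;> constructor <;> push_cast at * <;> linarith

lemma cube_eq_box {J : ℕ} (n : ℕ) (z : (Fin J → ℤ) × (Fin J → ℤ)) :
    cube n z = (Set.univ.pi fun i => Set.Ico ((z.1 i : ℝ) / 2 ^ n) (((z.1 i : ℝ) + 1) / 2 ^ n)) ×ˢ
      (Set.univ.pi fun i => Set.Ico ((z.2 i : ℝ) / 2 ^ n) (((z.2 i : ℝ) + 1) / 2 ^ n)) := by
  ext p
  simp only [cube, corner, Set.mem_setOf_eq, Set.mem_prod, Set.mem_pi, Set.mem_univ,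
    forall_true_left, Prod.ext_iff, funext_iff]
  constructor
  · rintro ⟨h1, h2⟩
    exact ⟨fun i => (floor_eq_iff_Ico n).1 (h1 i), fun i => (floor_eq_iff_Ico n).1 (h2 i)⟩
  · rintro ⟨h1, h2⟩
    exact ⟨fun i => (floor_eq_iff_Ico n).2 (h1 i), fun i => (floor_eq_iff_Ico n).2 (h2 i)⟩

lemma cube_measurable {J : ℕ} (n : ℕ) (z : (Fin J → ℤ) × (Fin J → ℤ)) :
    MeasurableSet (cube n z) := by
  rw [cube_eq_box]
  exact (MeasurableSet.univ_pi fun i => measurableSet_Ico).prod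
    (MeasurableSet.univ_pi fun i => measurableSet_Ico)

lemma mem_cube_self {J : ℕ} (n : ℕ) (p : X J) : p ∈ cube n (corner n p) := rfl

lemma cube_succ_subset {J : ℕ} (n : ℕ) (p : X J) :
    cube (n + 1) (corner (n + 1) p) ⊆ cube n (corner n p) := by
  intro q hq
  simp only [cube, corner, Set.mem_setOf_eq, Prod.ext_iff, funext_iff] at hq ⊢
  have key : ∀ x y : ℝ, ⌊(2 ^ (n + 1) : ℝ) * x⌋ = ⌊(2 ^ (n + 1) : ℝ) * y⌋ →
      ⌊(2 ^ n : ℝ) * x⌋ = ⌊(2 ^ n : ℝ) * y⌋ := by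
    intro x y h
    apply floor_eq_of_two_mul
    have e : ∀ u : ℝ, (2 : ℝ) * ((2 : ℝ) ^ n * u) = (2 : ℝ) ^ (n + 1) * u := by
      intro u; ring
    rw [e, e, h]
  exact ⟨fun i => key _ _ (hq.1 i), fun i => key _ _ (hq.2 i)⟩

lemma abs_sub_lt_of_floor_eq {x y : ℝ} {n : ℕ}
    (h : ⌊(2 ^ n : ℝ) * x⌋ = ⌊(2 ^ n : ℝ) * y⌋) : |x - y| < 1 / 2 ^ n := by
  have h2 : (0 : ℝ) < 2 ^ n := by positivity
  have hx1 := Int.floor_le ((2 ^ n : ℝ) * x)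
  have hx2 := Int.lt_floor_add_one ((2 ^ n : ℝ) * x)
  have hy1 := Int.floor_le ((2 ^ n : ℝ) * y)
  have hy2 := Int.lt_floor_add_one ((2 ^ n : ℝ) * y)
  rw [h] at hx1 hx2
  rw [abs_sub_lt_iff]
  constructor <;> rw [lt_div_iff₀ h2] <;> nlinarith

/-- The eligible corners at scale `n` for an inner approximation of `O`. -/
def corners {J : ℕ} (O : Set (X J)) (n : ℕ) : Set ((Fin J → ℤ) × (Fin J → ℤ)) :=
  {z | (∀ i, |z.1 i| ≤ 4 ^ n) ∧ (∀ i, |z.2 i| ≤ 4 ^ n) ∧ cube n z ⊆ O}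

lemma corners_finite {J : ℕ} (O : Set (X J)) (n : ℕ) : (corners O n).Finite := by
  have hfin : (Set.univ.pi fun _ : Fin J => Set.Icc (-(4 ^ n) : ℤ) (4 ^ n)).Finite :=
    Set.Finite.pi fun _ => Set.finite_Icc _ _
  apply (hfin.prod hfin).subset
  rintro z ⟨h1, h2, -⟩
  refine ⟨fun i _ => ?_, fun i _ => ?_⟩
  · exact Set.mem_Icc.2 (abs_le.1 (h1 i))
  · exact Set.mem_Icc.2 (abs_le.1 (h2 i))

def Kn {J : ℕ} (O : Set (X J)) (n : ℕ) : Set (X J) := ⋃ z ∈ corners O n, cube n z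

lemma Kn_subset {J : ℕ} (O : Set (X J)) (n : ℕ) : Kn O n ⊆ O := by
  intro p hp
  simp only [Kn, Set.mem_iUnion] at hp
  obtain ⟨z, hz, hpz⟩ := hp
  exact hz.2.2 hpz

lemma Kn_measurable {J : ℕ} (O : Set (X J)) (n : ℕ) : MeasurableSet (Kn O n) :=
  MeasurableSet.biUnion (corners_finite O n).countable fun z _ => cube_measurable n z

lemma corner_bound_succ {x : ℝ} {n : ℕ} (h : |⌊(2 ^ n : ℝ) * x⌋| ≤ 4 ^ n) :
    |⌊(2 ^ (n + 1) : ℝ) * x⌋| ≤ 4 ^ (n + 1) := by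
  rw [abs_le] at h ⊢
  have h4 : (1 : ℝ) ≤ (4 : ℝ) ^ n := one_le_pow₀ (by norm_num)
  have hc1 : (-((4 : ℝ) ^ n)) ≤ ((⌊(2 ^ n : ℝ) * x⌋ : ℤ) : ℝ) := by exact_mod_cast h.1
  have hc2 : ((⌊(2 ^ n : ℝ) * x⌋ : ℤ) : ℝ) ≤ (4 : ℝ) ^ n := by exact_mod_cast h.2
  have hx1 : -((4 : ℝ) ^ n) ≤ (2 ^ n : ℝ) * x := hc1.trans (Int.floor_le _)
  have hx2 : (2 ^ n : ℝ) * x < (4 : ℝ) ^ n + 1 :=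
    lt_of_lt_of_le (Int.lt_floor_add_one _) (by linarith)
  constructor
  · rw [Int.le_floor]
    push_cast
    rw [pow_succ, pow_succ]
    nlinarith
  · have hreal : (2 ^ (n + 1) : ℝ) * x < ((4 ^ (n + 1) : ℤ) : ℝ) := by
      push_cast
      rw [pow_succ, pow_succ]
      nlinarith
    exact (Int.floor_lt.2 hreal).le

lemma Kn_mono {J : ℕ} (O : Set (X J)) : Monotone (Kn O) := by
  apply monotone_nat_of_le_succ
  intro n p hp
  simp only [Kn, Set.mem_iUnion] at hp ⊢
  obtain ⟨z, hz, hpz⟩ := hp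
  have hzc : corner n p = z := hpz
  refine ⟨corner (n + 1) p, ⟨?_, ?_, ?_⟩, mem_cube_self _ _⟩
  · intro i
    have := hz.1 i
    rw [← hzc] at this
    exact corner_bound_succ this
  · intro i
    have := hz.2.1 i
    rw [← hzc] at this
    exact corner_bound_succ this
  · refine (cube_succ_subset n p).trans ?_
    rw [hzc]
    exact hz.2.2

lemma eventually_corner_bound (x : ℝ) :
    ∀ᶠ n : ℕ in atTop, |⌊(2 ^ n : ℝ) * x⌋| ≤ 4 ^ n := by
  have h2 : Tendsto (fun n : ℕ => (2 : ℝ) ^ n) atTop atTop :=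
    tendsto_pow_atTop_atTop_of_one_lt one_lt_two
  filter_upwards [h2.eventually_ge_atTop (|x| + 1)] with n hn
  have h2p : (0 : ℝ) < 2 ^ n := by positivity
  have h44 : (4 : ℝ) ^ n = 2 ^ n * 2 ^ n := by rw [← mul_pow]; norm_num
  have hm1 : (2 ^ n : ℝ) * (-|x|) ≤ 2 ^ n * x :=
    mul_le_mul_of_nonneg_left (neg_abs_le x) h2p.le
  have hm2 : (2 ^ n : ℝ) * x ≤ 2 ^ n * |x| :=
    mul_le_mul_of_nonneg_left (le_abs_self x) h2p.le
  have hm3 : (2 ^ n : ℝ) * |x| ≤ 2 ^ n * (2 ^ n - 1) :=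
    mul_le_mul_of_nonneg_left (by linarith) h2p.le
  rw [abs_le]
  constructor
  · rw [Int.le_floor]
    push_cast
    nlinarith
  · have hreal : (2 ^ n : ℝ) * x < ((4 ^ n : ℤ) : ℝ) := by
      push_cast
      nlinarith
    exact (Int.floor_lt.2 hreal).le

lemma iUnion_Kn {J : ℕ} (O : Set (X J)) (hO : IsOpen O) : (⋃ n, Kn O n) = O := by
  apply Set.Subset.antisymm
  · exact Set.iUnion_subset fun n => Kn_subset O n
  · intro p hp
    obtain ⟨r, hr, hball⟩ := Metric.isOpen_iff.1 hO p hp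
    have h2 : Tendsto (fun n : ℕ => (2 : ℝ) ^ n) atTop atTop :=
      tendsto_pow_atTop_atTop_of_one_lt one_lt_two
    have hev : ∀ᶠ n : ℕ in atTop, (∀ i, |⌊(2 ^ n : ℝ) * p.1 i⌋| ≤ 4 ^ n) ∧
        (∀ i, |⌊(2 ^ n : ℝ) * p.2 i⌋| ≤ 4 ^ n) ∧ (1 : ℝ) / 2 ^ n ≤ r := by
      refine (eventually_all.2 fun i => eventually_corner_bound (p.1 i)).and
        ((eventually_all.2 fun i => eventually_corner_bound (p.2 i)).and ?_)
      filter_upwards [h2.eventually_ge_atTop (1 / r)] with n hn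
      rw [div_le_iff₀ (by positivity)]
      rw [div_le_iff₀ hr] at hn
      linarith
    obtain ⟨n, hn1, hn2, hn3⟩ := hev.exists
    refine Set.mem_iUnion.2 ⟨n, Set.mem_iUnion₂.2 ⟨corner n p, ⟨hn1, hn2, ?_⟩, mem_cube_self n p⟩⟩
    intro q hq
    apply hball
    have hqc : corner n q = corner n p := hq
    simp only [corner, Prod.ext_iff, funext_iff] at hqc
    rw [Metric.mem_ball, Prod.dist_eq]
    apply max_lt
    · rw [dist_pi_lt_iff hr]
      intro i
      rw [Real.dist_eq]
      exact lt_of_lt_of_le (abs_sub_lt_of_floor_eq (hqc.1 i)) hn3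
    · rw [dist_pi_lt_iff hr]
      intro i
      rw [Real.dist_eq]
      exact lt_of_lt_of_le (abs_sub_lt_of_floor_eq (hqc.2 i)) hn3

lemma approx {J : ℕ}
    (μ : ℝ → Measure (X J)) (ν : Measure (X J))
    (hμ : ∀ T, IsProbabilityMeasure (μ T)) [IsFiniteMeasure ν]
    (T₀ : ℝ) (η : ℝ → ℝ)
    (hdisc : ∀ T, T₀ ≤ T → ∀ (I I' : Fin J → Set ℝ),
      (∀ i, (I i).OrdConnected) → (∀ i, (I' i).OrdConnected) →
      |((μ T) ((Set.univ.pi I) ×ˢ (Set.univ.pi I'))).toReal -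
          (ν ((Set.univ.pi I) ×ˢ (Set.univ.pi I'))).toReal| ≤ η T)
    (O : Set (X J)) (hO : IsOpen O) {ε : ℝ} (hε : 0 < ε) :
    ∃ K : Set (X J), MeasurableSet K ∧ K ⊆ O ∧ (ν O).toReal ≤ (ν K).toReal + ε ∧
      ∃ N : ℕ, ∀ T, T₀ ≤ T → |((μ T) K).toReal - (ν K).toReal| ≤ N * η T := by
  -- choose a scale n such that ν (Kn O n) is close to ν O
  have htend : Tendsto (fun n => (ν (Kn O n)).toReal) atTop (nhds (ν O).toReal) := by
    have h1 : Tendsto (fun n => ν (Kn O n)) atTop (nhds (ν (⋃ n, Kn O n))) :=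
      tendsto_measure_iUnion_atTop (Kn_mono O)
    rw [iUnion_Kn O hO] at h1
    exact (ENNReal.tendsto_toReal (measure_ne_top ν O)).comp h1
  obtain ⟨n, hn⟩ := Metric.tendsto_atTop.1 htend ε hε
  have hnn := hn n le_rfl
  rw [Real.dist_eq, abs_sub_lt_iff] at hnn
  have hνK : (ν O).toReal ≤ (ν (Kn O n)).toReal + ε := by linarith [hnn.2]
  refine ⟨Kn O n, Kn_measurable O n, Kn_subset O n, hνK, ?_⟩
  -- express Kn O n as a finite disjoint union of cubes
  set F : Finset ((Fin J → ℤ) × (Fin J → ℤ)) := (corners_finite O n).toFinset with hF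
  have hKF : Kn O n = ⋃ z ∈ F, cube n z := by
    ext p
    simp only [Kn, Set.mem_iUnion, hF, Set.Finite.mem_toFinset]
  have hdisj : (↑F : Set ((Fin J → ℤ) × (Fin J → ℤ))).PairwiseDisjoint (cube n) := by
    intro z _ z' _ hne
    rw [Function.onFun, Set.disjoint_left]
    intro p hp hp'
    exact hne (hp ▸ hp' ▸ rfl)
  have hmeassum : ∀ (m : Measure (X J)), m (Kn O n) = ∑ z ∈ F, m (cube n z) := by
    intro m
    rw [hKF]
    exact measure_biUnion_finset hdisj fun z _ => cube_measurable n z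
  refine ⟨F.card, fun T hT => ?_⟩
  haveI := hμ T
  have hμsum : ((μ T) (Kn O n)).toReal = ∑ z ∈ F, ((μ T) (cube n z)).toReal := by
    rw [hmeassum (μ T)]
    exact ENNReal.toReal_sum fun z _ => measure_ne_top _ _
  have hνsum : (ν (Kn O n)).toReal = ∑ z ∈ F, (ν (cube n z)).toReal := by
    rw [hmeassum ν]
    exact ENNReal.toReal_sum fun z _ => measure_ne_top _ _
  rw [hμsum, hνsum, ← Finset.sum_sub_distrib]
  calc |∑ z ∈ F, (((μ T) (cube n z)).toReal - (ν (cube n z)).toReal)|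
      ≤ ∑ z ∈ F, |((μ T) (cube n z)).toReal - (ν (cube n z)).toReal| :=
        Finset.abs_sum_le_sum_abs _ _
    _ ≤ F.card • η T := by
        apply Finset.sum_le_card_nsmul
        intro z _
        rw [cube_eq_box]
        exact hdisc T hT _ _ (fun i => Set.ordConnected_Ico) (fun i => Set.ordConnected_Ico)
    _ = F.card * η T := nsmul_eq_mul _ _

variable {α : Type*} [MeasurableSpace α]

lemma toReal_mono_meas (m : Measure α) [IsFiniteMeasure m] {A B : Set α} (h : A ⊆ B) :
    (m A).toReal ≤ (m B).toReal :=
  ENNReal.toReal_mono (measure_ne_top _ _) (measure_mono h)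

lemma toReal_union_le (m : Measure α) [IsFiniteMeasure m] (A B : Set α) :
    (m (A ∪ B)).toReal ≤ (m A).toReal + (m B).toReal := by
  calc (m (A ∪ B)).toReal ≤ (m A + m B).toReal :=
        ENNReal.toReal_mono (by simp [measure_ne_top]) (measure_union_le A B)
    _ = (m A).toReal + (m B).toReal := ENNReal.toReal_add (measure_ne_top _ _) (measure_ne_top _ _)

lemma toReal_compl (m : Measure α) [IsProbabilityMeasure m] {A : Set α} (hA : MeasurableSet A) :
    (m Aᶜ).toReal = 1 - (m A).toReal := by
  rw [prob_compl_eq_one_sub hA, ENNReal.toReal_sub_of_le prob_le_one ENNReal.one_ne_top,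
    ENNReal.toReal_one]

lemma null_of_density (m : Measure α) [IsFiniteMeasure m] (S : Set α) {δ₀ B : ℝ}
    (hδ : 0 < δ₀) (hB : 0 < B) (h : ∀ ε : ℝ, 0 < ε → ε < δ₀ → (m S).toReal ≤ B * ε) :
    m S = 0 := by
  have h0 : (m S).toReal ≤ 0 := by
    by_contra hlt
    push_neg at hlt
    set ε := min ((m S).toReal / (2 * B)) (δ₀ / 2) with hε
    have hεpos : 0 < ε := lt_min (by positivity) (by linarith)
    have hεδ : ε < δ₀ := lt_of_le_of_lt (min_le_right _ _) (by linarith)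
    have h1 := h ε hεpos hεδ
    have h2 : B * ε ≤ (m S).toReal / 2 := by
      calc B * ε ≤ B * ((m S).toReal / (2 * B)) :=
            mul_le_mul_of_nonneg_left (min_le_left _ _) hB.le
        _ = (m S).toReal / 2 := by field_simp
    linarith
  have h1 : (m S).toReal = 0 := le_antisymm h0 ENNReal.toReal_nonneg
  rcases (ENNReal.toReal_eq_zero_iff _).1 h1 with h | h
  · exact h
  · exact absurd h (measure_ne_top m S)

lemma main {J : ℕ} (ψ : X J → ℝ) (hψc : Continuous ψ) (hψ0 : ∀ p, 0 ≤ ψ p)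
    (μ : ℝ → Measure (X J)) (ν : Measure (X J))
    (hμ : ∀ T, IsProbabilityMeasure (μ T)) [IsProbabilityMeasure ν]
    (T₀ : ℝ) (η : ℝ → ℝ) (hη : Tendsto η atTop (nhds 0))
    (hdisc : ∀ T, T₀ ≤ T → ∀ (I I' : Fin J → Set ℝ),
      (∀ i, (I i).OrdConnected) → (∀ i, (I' i).OrdConnected) →
      |((μ T) ((Set.univ.pi I) ×ˢ (Set.univ.pi I'))).toReal -
          (ν ((Set.univ.pi I) ×ˢ (Set.univ.pi I'))).toReal| ≤ η T)
    (hdens : ∀ τ : ℝ, ∃ δ₀ > (0 : ℝ), ∃ B > (0 : ℝ), ∀ ε : ℝ, 0 < ε → ε < δ₀ →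
      (ν {p | |Real.log (ψ p) - τ| ≤ ε}).toReal ≤ B * ε)
    (τ : ℝ) :
    Tendsto (fun T => ((μ T) {p | τ < Real.log (ψ p)}).toReal) atTop
      (nhds ((ν {p | τ < Real.log (ψ p)}).toReal)) := by
  classical
  set c : ℝ := Real.exp τ with hcdef
  have hcpos : 0 < c := Real.exp_pos τ
  set A : Set (X J) := {p | τ < Real.log (ψ p)} with hA
  set O₁ : Set (X J) := {p | c < ψ p} with hO₁def
  set O₂ : Set (X J) := {p | ψ p < c} with hO₂def
  have hO₁ : IsOpen O₁ := isOpen_lt continuous_const hψc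
  have hO₂ : IsOpen O₂ := isOpen_lt hψc continuous_const
  -- null sets
  have hZ0 : ν {p | ψ p = 0} = 0 := by
    obtain ⟨δ₀, hδ₀, B, hB, hd⟩ := hdens 0
    apply null_of_density ν _ hδ₀ hB
    intro ε h1 h2
    refine le_trans (ENNReal.toReal_mono (measure_ne_top _ _) (measure_mono ?_)) (hd ε h1 h2)
    intro p hp
    simp only [Set.mem_setOf_eq] at hp ⊢
    rw [hp, Real.log_zero]
    simpa using h1.le
  have hZc : ν {p | ψ p = c} = 0 := by
    obtain ⟨δ₀, hδ₀, B, hB, hd⟩ := hdens τ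
    apply null_of_density ν _ hδ₀ hB
    intro ε h1 h2
    refine le_trans (ENNReal.toReal_mono (measure_ne_top _ _) (measure_mono ?_)) (hd ε h1 h2)
    intro p hp
    simp only [Set.mem_setOf_eq] at hp ⊢
    rw [hp, hcdef, Real.log_exp]
    simpa using h1.le
  -- set inclusions
  have hO₁A : O₁ ⊆ A := by
    intro p hp
    simp only [hO₁def, hA, Set.mem_setOf_eq] at hp ⊢
    exact (Real.lt_log_iff_exp_lt (hcpos.trans hp)).2 hp
  have hAsub : A ⊆ O₁ ∪ {p | ψ p = 0} := by
    intro p hp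
    simp only [hA, Set.mem_setOf_eq] at hp
    rcases (hψ0 p).eq_or_lt with h0 | h0
    · exact Or.inr h0.symm
    · exact Or.inl ((Real.lt_log_iff_exp_lt h0).1 hp)
  have hAO₁ : ν A = ν O₁ := by
    apply le_antisymm
    · calc ν A ≤ ν (O₁ ∪ {p | ψ p = 0}) := measure_mono hAsub
        _ ≤ ν O₁ + ν {p | ψ p = 0} := measure_union_le _ _
        _ = ν O₁ := by rw [hZ0, add_zero]
    · exact measure_mono hO₁A
  have hO₂compl : ν O₂ᶜ = ν O₁ := by
    have hset : O₂ᶜ = O₁ ∪ {p | ψ p = c} := by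
      ext p
      simp only [hO₁def, hO₂def, Set.mem_compl_iff, Set.mem_setOf_eq, Set.mem_union, not_lt]
      constructor
      · intro h
        rcases h.lt_or_eq with h' | h'
        · exact Or.inl h'
        · exact Or.inr h'.symm
      · rintro (h | h)
        · exact h.le
        · exact h.ge
    apply le_antisymm
    · calc ν O₂ᶜ = ν (O₁ ∪ {p | ψ p = c}) := by rw [hset]
        _ ≤ ν O₁ + ν {p | ψ p = c} := measure_union_le _ _
        _ = ν O₁ := by rw [hZc, add_zero]
    · apply measure_mono
      rw [hset]
      exact Set.subset_union_left
  -- small values of ψ have small ν-measure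
  have hψδ : Tendsto (fun k : ℕ => (ν {p | ψ p ≤ 1 / (k + 1)}).toReal) atTop (nhds 0) := by
    have hmono : Antitone (fun k : ℕ => {p : X J | ψ p ≤ 1 / (k + 1)}) := by
      intro k l hkl p hp
      simp only [Set.mem_setOf_eq] at hp ⊢
      refine hp.trans ?_
      apply one_div_le_one_div_of_le (by positivity)
      exact_mod_cast Nat.add_le_add_right hkl 1
    have hint : (⋂ k : ℕ, {p : X J | ψ p ≤ 1 / (k + 1)}) = {p | ψ p = 0} := by
      ext p
      simp only [Set.mem_iInter, Set.mem_setOf_eq]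
      constructor
      · intro h
        refine le_antisymm ?_ (hψ0 p)
        by_contra hlt
        push_neg at hlt
        obtain ⟨k, hk⟩ := exists_nat_one_div_lt hlt
        exact absurd (h k) (not_le.2 hk)
      · intro h k
        rw [h]
        positivity
    have h1 : Tendsto (fun k : ℕ => ν {p | ψ p ≤ 1 / (k + 1)}) atTop (nhds 0) := by
      have := tendsto_measure_iInter_atTop
        (μ := ν) (s := fun k : ℕ => {p : X J | ψ p ≤ 1 / (k + 1)})
        (fun k => ((hψc.measurable measurableSet_Iic)).nullMeasurableSet)
        hmono ⟨0, measure_ne_top _ _⟩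
      rw [hint, hZ0] at this
      exact this
    have h2 := (ENNReal.tendsto_toReal (by simp : (0 : ENNReal) ≠ ⊤)).comp h1
    simpa [Function.comp_def] using h2
  -- main estimate
  rw [Metric.tendsto_atTop]
  intro ε hε
  set ε' : ℝ := ε / 6 with hε'def
  have hε' : 0 < ε' := by positivity
  obtain ⟨k, hk⟩ := Metric.tendsto_atTop.1 hψδ ε' hε'
  have hkk := hk k le_rfl
  rw [Real.dist_eq, sub_zero, _root_.abs_of_nonneg ENNReal.toReal_nonneg] at hkk
  set δ : ℝ := 1 / (k + 1) with hδdef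
  have hδpos : 0 < δ := by positivity
  set O₃ : Set (X J) := {p | δ < ψ p} with hO₃def
  have hO₃ : IsOpen O₃ := isOpen_lt continuous_const hψc
  obtain ⟨K₁, hK₁m, hK₁s, hK₁ν, N₁, hK₁d⟩ := approx μ ν hμ T₀ η hdisc O₁ hO₁ hε'
  obtain ⟨K₂, hK₂m, hK₂s, hK₂ν, N₂, hK₂d⟩ := approx μ ν hμ T₀ η hdisc O₂ hO₂ hε'
  obtain ⟨K₃, hK₃m, hK₃s, hK₃ν, N₃, hK₃d⟩ := approx μ ν hμ T₀ η hdisc O₃ hO₃ hε'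
  set Nb : ℝ := N₁ + N₂ + N₃ + 1 with hNb
  have hNbpos : 0 < Nb := by positivity
  obtain ⟨T₂, hT₂⟩ := Metric.tendsto_atTop.1 hη (ε' / Nb) (by positivity)
  refine ⟨max T₀ T₂, fun T hT => ?_⟩
  have hT0 : T₀ ≤ T := le_trans (le_max_left _ _) hT
  have hTη : |η T| < ε' / Nb := by
    have := hT₂ T (le_trans (le_max_right _ _) hT)
    rwa [Real.dist_eq, sub_zero] at this
  haveI := hμ T
  have hbound : ∀ N : ℕ, (N : ℝ) ≤ Nb → (N : ℝ) * η T ≤ ε' := by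
    intro N hN
    calc (N : ℝ) * η T ≤ (N : ℝ) * |η T| :=
          mul_le_mul_of_nonneg_left (le_abs_self _) (Nat.cast_nonneg N)
      _ ≤ Nb * |η T| := mul_le_mul_of_nonneg_right hN (abs_nonneg _)
      _ ≤ Nb * (ε' / Nb) := mul_le_mul_of_nonneg_left hTη.le hNbpos.le
      _ = ε' := by field_simp
  have hb₁ : (N₁ : ℝ) * η T ≤ ε' := hbound N₁ (by rw [hNb]; push_cast; linarith)
  have hb₂ : (N₂ : ℝ) * η T ≤ ε' := hbound N₂ (by rw [hNb]; push_cast; linarith)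
  have hb₃ : (N₃ : ℝ) * η T ≤ ε' := hbound N₃ (by rw [hNb]; push_cast; linarith)
  have hd₁ := abs_le.1 (hK₁d T hT0)
  have hd₂ := abs_le.1 (hK₂d T hT0)
  have hd₃ := abs_le.1 (hK₃d T hT0)
  -- lower bound
  have hlow : (ν A).toReal - 2 * ε' ≤ ((μ T) A).toReal := by
    have l1 : ((μ T) K₁).toReal ≤ ((μ T) A).toReal :=
      toReal_mono_meas (μ T) (hK₁s.trans hO₁A)
    have l4 : (ν A).toReal = (ν O₁).toReal := by rw [hAO₁]
    linarith [hd₁.1, hK₁ν]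
  -- upper bound
  have hup : ((μ T) A).toReal ≤ (ν A).toReal + 5 * ε' := by
    have u0 : ((μ T) A).toReal ≤ ((μ T) O₁).toReal + ((μ T) {p | ψ p ≤ δ}).toReal := by
      have hsub : A ⊆ O₁ ∪ {p | ψ p ≤ δ} := by
        intro p hp
        rcases hAsub hp with h | h
        · exact Or.inl h
        · exact Or.inr (by simp only [Set.mem_setOf_eq] at h ⊢; rw [h]; exact hδpos.le)
      calc ((μ T) A).toReal ≤ ((μ T) (O₁ ∪ {p | ψ p ≤ δ})).toReal :=
            toReal_mono_meas (μ T) hsub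
        _ ≤ _ := toReal_union_le (μ T) _ _
    have u1 : ((μ T) O₁).toReal ≤ 1 - ((μ T) K₂).toReal := by
      have hsub : O₁ ⊆ K₂ᶜ := by
        intro p hp hpK
        have h1 : ψ p < c := hK₂s hpK
        have h2 : c < ψ p := hp
        exact absurd h1 (not_lt.2 h2.le)
      calc ((μ T) O₁).toReal ≤ ((μ T) K₂ᶜ).toReal := toReal_mono_meas (μ T) hsub
        _ = 1 - ((μ T) K₂).toReal := toReal_compl (μ T) hK₂m
    have u4 : (ν O₂ᶜ).toReal = 1 - (ν O₂).toReal := toReal_compl ν hO₂.measurableSet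
    have u5 : (ν O₂ᶜ).toReal = (ν A).toReal := by rw [hO₂compl, hAO₁]
    have hO₁bound : ((μ T) O₁).toReal ≤ (ν A).toReal + 2 * ε' := by
      linarith [hd₂.1, hK₂ν]
    have hO₃c : {p : X J | ψ p ≤ δ} = O₃ᶜ := by
      ext p
      simp only [hO₃def, Set.mem_compl_iff, Set.mem_setOf_eq, not_lt]
    have u6 : ((μ T) {p | ψ p ≤ δ}).toReal ≤ 3 * ε' := by
      have e1 : ((μ T) {p | ψ p ≤ δ}).toReal = 1 - ((μ T) O₃).toReal := by
        rw [hO₃c]; exact toReal_compl (μ T) hO₃.measurableSet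
      have e2 : ((μ T) K₃).toReal ≤ ((μ T) O₃).toReal := toReal_mono_meas (μ T) hK₃s
      have e3 : (ν O₃ᶜ).toReal = 1 - (ν O₃).toReal := toReal_compl ν hO₃.measurableSet
      have e4 : (ν O₃ᶜ).toReal ≤ ε' := by
        rw [← hO₃c]
        exact hkk.le
      linarith [hd₃.1, hK₃ν]
    linarith
  rw [Real.dist_eq, abs_sub_lt_iff]
  constructor
  · have : ε' = ε / 6 := hε'def
    linarith
  · have : ε' = ε / 6 := hε'def
    linarith

end DistConv


/-- A box-discrepancy bound `η(T) → 0` between the measures `μ_T` and `ν` on `ℝ^{2J}`,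
combined with local boundedness of the density of the pushforward of `ν` under
`φ(u,v) = log|Σ_j a_j e^{u_j+iv_j}|`, yields convergence
`μ_T({φ > τ}) → ν({φ > τ})` for each fixed `τ`. -/
theorem distribution_convergence (J : ℕ) (hJ : 1 ≤ J) (a : Fin J → ℂ)
    (ha : ∀ j, a j ≠ 0)
    (μ : ℝ → Measure ((Fin J → ℝ) × (Fin J → ℝ)))
    (ν : Measure ((Fin J → ℝ) × (Fin J → ℝ)))
    (hμ : ∀ T, IsProbabilityMeasure (μ T)) [IsProbabilityMeasure ν]
    (T₀ : ℝ) (η : ℝ → ℝ) (hη : Tendsto η atTop (nhds 0))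
    (hdisc : ∀ T, T₀ ≤ T → ∀ (I I' : Fin J → Set ℝ),
      (∀ i, (I i).OrdConnected) → (∀ i, (I' i).OrdConnected) →
      |((μ T) ((Set.univ.pi I) ×ˢ (Set.univ.pi I'))).toReal -
          (ν ((Set.univ.pi I) ×ˢ (Set.univ.pi I'))).toReal| ≤ η T)
    (hdens : ∀ τ : ℝ, ∃ δ₀ > (0 : ℝ), ∃ B > (0 : ℝ), ∀ ε : ℝ, 0 < ε → ε < δ₀ →
      (ν {p | |Real.log (Norm.norm
          (∑ j, a j * Complex.exp (p.1 j + p.2 j * Complex.I))) - τ| ≤ ε}).toReal ≤ B * ε) :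
    ∀ τ : ℝ,
      Tendsto
        (fun T => ((μ T) {p : (Fin J → ℝ) × (Fin J → ℝ) |
          τ < Real.log (Norm.norm
            (∑ j, a j * Complex.exp (p.1 j + p.2 j * Complex.I)))}).toReal)
        atTop
        (nhds ((ν {p : (Fin J → ℝ) × (Fin J → ℝ) |
          τ < Real.log (Norm.norm
            (∑ j, a j * Complex.exp (p.1 j + p.2 j * Complex.I)))}).toReal)) := by
  intro τ
  have hψc : Continuous (fun p : DistConv.X J =>
      Norm.norm (∑ j, a j * Complex.exp (p.1 j + p.2 j * Complex.I))) := by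
    apply continuous_norm.comp
    apply continuous_finset_sum
    intro j _
    apply continuous_const.mul
    apply Complex.continuous_exp.comp
    exact (Complex.continuous_ofReal.comp ((continuous_apply j).comp continuous_fst)).add
      ((Complex.continuous_ofReal.comp ((continuous_apply j).comp continuous_snd)).mul
        continuous_const)
  exact DistConv.main (fun p : DistConv.X J =>
      Norm.norm (∑ j, a j * Complex.exp (p.1 j + p.2 j * Complex.I)))
    hψc (fun p => norm_nonneg _) μ ν hμ T₀ η hη hdisc hdens τ
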